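/- Let R be a commutative ring, let M and N be finitely generated projective R-modules, and let d ≥ 0. Then the natural R-linear map P^d(M, R) ⊗_R N → P^d(M, N), sending f ⊗ n to the polynomial law whose value at x ∈ M ⊗_R S is f_S(x) • (n ⊗ 1), is an isomorphism of R-modules. -/

import Mathlib

open TensorProduct

universe u

variable (R : Type u) [CommRing R]

/-- The type of families of functions `S ⊗[R] M → S ⊗[R] N`, one for each commutative
`R`-algebra `S` (no naturality required). -/
abbrev RawLaw (M N : Type u) [AddCommGroup M] [Module R M] [AddCommGroup N] [Module R N] :
    Type (u + 1) :=
  ∀ (S : Type u) [CommRing S] [Algebra R S], S ⊗[R] M → S ⊗[R] N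

variable (M N : Type u) [AddCommGroup M] [Module R M] [AddCommGroup N] [Module R N]

/-- Naturality: such a family is a polynomial law (in the sense of Roby) if it commutes
with the maps induced by every `R`-algebra homomorphism. -/
def IsPolyLaw (f : RawLaw R M N) : Prop :=
  ∀ (S S' : Type u) [CommRing S] [Algebra R S] [CommRing S'] [Algebra R S']
    (φ : S →ₐ[R] S') (x : S ⊗[R] M),
    LinearMap.rTensor N φ.toLinearMap (f S x) = f S' (LinearMap.rTensor M φ.toLinearMap x)

/-- Homogeneity of degree `d`. -/
def IsHomog (d : ℕ) (f : RawLaw R M N) : Prop :=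
  ∀ (S : Type u) [CommRing S] [Algebra R S] (s : S) (x : S ⊗[R] M),
    f S (s • x) = s ^ d • f S x

/-- The `R`-module `P^d(M, N)` of polynomial laws from `M` to `N` homogeneous of
degree `d`, as a submodule of the module of raw families. -/
noncomputable def polyLawHomog (d : ℕ) : Submodule R (RawLaw R M N) where
  carrier := {f | IsPolyLaw R M N f ∧ IsHomog R M N d f}
  add_mem' := by
    rintro f g ⟨hf1, hf2⟩ ⟨hg1, hg2⟩
    constructor
    · intro S S' _ _ _ _ φ x
      show LinearMap.rTensor N φ.toLinearMap (f S x + g S x)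
          = f S' (LinearMap.rTensor M φ.toLinearMap x) + g S' (LinearMap.rTensor M φ.toLinearMap x)
      rw [map_add, hf1 S S' φ x, hg1 S S' φ x]
    · intro S _ _ s xx
      show f S (s • xx) + g S (s • xx) = s ^ d • (f S xx + g S xx)
      rw [hf2 S s xx, hg2 S s xx, smul_add]
  zero_mem' := by
    constructor
    · intro S S' _ _ _ _ φ x
      show LinearMap.rTensor N φ.toLinearMap 0 = (0 : S' ⊗[R] N)
      rw [map_zero]
    · intro S _ _ s xx
      show (0 : S ⊗[R] N) = s ^ d • (0 : S ⊗[R] N)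
      rw [smul_zero]
  smul_mem' := by
    rintro r f ⟨hf1, hf2⟩
    constructor
    · intro S S' _ _ _ _ φ x
      show LinearMap.rTensor N φ.toLinearMap (r • f S x)
          = r • f S' (LinearMap.rTensor M φ.toLinearMap x)
      rw [map_smul, hf1 S S' φ x]
    · intro S _ _ s xx
      show r • f S (s • xx) = s ^ d • (r • f S xx)
      rw [hf2 S s xx, smul_comm]

/-!
Postcomposition with a linear map `ℓ : N → N'` sends homogeneous polynomial laws to homogeneous
polynomial laws, and is linear and functorial in `ℓ`. A finitely generated projective `N` has a
finite dual basis `(ℓ j, e j)`, i.e. `∑ j, (r ↦ r • e j) ∘ ℓ j = id`. Postcomposing, a law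
`g : M → N` is `∑ j, (ℓ j ∘ g) • e j`, so `g ↦ ∑ j, (ℓ j ∘ g) ⊗ e j` is inverse to
`f ⊗ n ↦ f • n`.
-/

theorem Module.Finite.exists_dual_basis_of_projective (R N : Type*) [CommSemiring R]
    [AddCommMonoid N] [Module R N] [Module.Finite R N] [Module.Projective R N] :
    ∃ (n : ℕ) (ℓ : Fin n → N →ₗ[R] R) (e : Fin n → N), ∀ y, ∑ j, ℓ j y • e j = y := by
  obtain ⟨n, f, g, -, -, hfg⟩ := Module.Finite.exists_comp_eq_id_of_projective R N
  refine ⟨n, fun j => LinearMap.proj j ∘ₗ g, fun j => f (Pi.single j 1), fun y => ?_⟩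
  calc ∑ j, g y j • f (Pi.single j 1) = f (∑ j, Pi.single j (g y j)) := by
        simp only [map_sum, ← map_smul, ← Pi.single_smul', smul_eq_mul, mul_one]
    _ = y := by rw [Finset.univ_sum_single]; exact LinearMap.congr_fun hfg y

namespace RawLaw

variable {R M N} {N' : Type u} [AddCommGroup N'] [Module R N']

noncomputable def postcomp : (N →ₗ[R] N') →ₗ[R] RawLaw R M N →ₗ[R] RawLaw R M N' :=
  LinearMap.mk₂ R (fun ℓ g S _ _ x => ℓ.lTensor S (g S x))
    (fun _ _ _ => by funext S _ _ x; simp [LinearMap.lTensor_add])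
    (fun _ _ _ => by funext S _ _ x; simp [LinearMap.lTensor_smul])
    (fun _ _ _ => by funext S _ _ x; simp)
    (fun _ _ _ => by funext S _ _ x; simp)

@[simp]
theorem postcomp_apply (ℓ : N →ₗ[R] N') (g : RawLaw R M N) (S : Type u) [CommRing S]
    [Algebra R S] (x : S ⊗[R] M) : postcomp ℓ g S x = ℓ.lTensor S (g S x) :=
  rfl

theorem postcomp_id (g : RawLaw R M N) : postcomp LinearMap.id g = g := by
  funext S _ _ x
  simp

theorem postcomp_postcomp {N'' : Type u} [AddCommGroup N''] [Module R N'']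
    (ℓ' : N' →ₗ[R] N'') (ℓ : N →ₗ[R] N') (g : RawLaw R M N) :
    postcomp ℓ' (postcomp ℓ g) = postcomp (ℓ' ∘ₗ ℓ) g := by
  funext S _ _ x
  simp [LinearMap.lTensor_comp_apply]

theorem _root_.IsPolyLaw.postcomp {g : RawLaw R M N} (hg : IsPolyLaw R M N g)
    (ℓ : N →ₗ[R] N') :
    IsPolyLaw R M N' (postcomp ℓ g) := by
  intro S S' _ _ _ _ φ x
  simp only [postcomp_apply, ← hg S S' φ x]
  rw [← LinearMap.comp_apply, LinearMap.rTensor_comp_lTensor, ← LinearMap.lTensor_comp_rTensor,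
    LinearMap.comp_apply]

theorem _root_.IsHomog.postcomp {d : ℕ} {g : RawLaw R M N} (hg : IsHomog R M N d g)
    (ℓ : N →ₗ[R] N') : IsHomog R M N' d (postcomp ℓ g) := by
  intro S _ _ s x
  simp only [postcomp_apply, hg S s x, ← LinearMap.baseChange_eq_ltensor, map_smul]

theorem postcomp_mem {d : ℕ} {g : RawLaw R M N} (hg : g ∈ polyLawHomog R M N d)
    (ℓ : N →ₗ[R] N') : postcomp ℓ g ∈ polyLawHomog R M N' d :=
  ⟨IsPolyLaw.postcomp hg.1 ℓ, IsHomog.postcomp hg.2 ℓ⟩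

end RawLaw

theorem TensorProduct.rid_smul_one_tmul {R S N : Type*} [CommSemiring R] [CommSemiring S]
    [Algebra R S] [AddCommMonoid N] [Module R N] (z : S ⊗[R] R) (n : N) :
    TensorProduct.rid R S z • ((1 : S) ⊗ₜ[R] n) =
      (LinearMap.toSpanSingleton R N n).lTensor S z := by
  induction z using TensorProduct.induction_on with
  | zero => simp
  | tmul s r =>
    rw [TensorProduct.rid_tmul, LinearMap.lTensor_tmul, LinearMap.toSpanSingleton_apply,
      TensorProduct.smul_tmul', smul_eq_mul, mul_one, TensorProduct.smul_tmul]
  | add a b ha hb => rw [map_add, add_smul, ha, hb, map_add]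

section TensorToLaw

variable (d : ℕ)

/-- `f ⊗ n ↦ (x ↦ f(x) • n)`, where the law `x ↦ f(x) • n` is `f` postcomposed with
`r ↦ r • n`. -/
noncomputable def tensorToLaw : polyLawHomog R M R d ⊗[R] N →ₗ[R] RawLaw R M N :=
  TensorProduct.lift <| (RawLaw.postcomp.compl₁₂
    (LinearMap.ringLmapEquivSelf R R N).symm.toLinearMap (polyLawHomog R M R d).subtype).flip

theorem tensorToLaw_tmul (f : polyLawHomog R M R d) (n : N) :
    tensorToLaw R M N d (f ⊗ₜ n) = RawLaw.postcomp (LinearMap.toSpanSingleton R N n) f.1 :=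
  rfl

theorem tensorToLaw_mem (t : polyLawHomog R M R d ⊗[R] N) :
    tensorToLaw R M N d t ∈ polyLawHomog R M N d := by
  induction t using TensorProduct.induction_on with
  | zero => simp
  | tmul f n => exact RawLaw.postcomp_mem f.2 _
  | add a b ha hb => simpa using (polyLawHomog R M N d).add_mem ha hb

noncomputable def tensorToPolyLaw : polyLawHomog R M R d ⊗[R] N →ₗ[R] polyLawHomog R M N d :=
  (tensorToLaw R M N d).codRestrict _ (tensorToLaw_mem R M N d)

variable {ι : Type*} [Fintype ι] (ℓ : ι → N →ₗ[R] R) (e : ι → N)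

noncomputable def polyLawToTensor : polyLawHomog R M N d →ₗ[R] polyLawHomog R M R d ⊗[R] N :=
  ∑ j, (TensorProduct.mk R _ N).flip (e j) ∘ₗ
    (RawLaw.postcomp (ℓ j)).restrict fun _ hg => RawLaw.postcomp_mem hg (ℓ j)

theorem polyLawToTensor_apply (g : polyLawHomog R M N d) :
    polyLawToTensor R M N d ℓ e g =
      ∑ j, (⟨RawLaw.postcomp (ℓ j) g, RawLaw.postcomp_mem g.2 (ℓ j)⟩ :
        polyLawHomog R M R d) ⊗ₜ e j := by
  simp only [polyLawToTensor, LinearMap.coe_sum, LinearMap.coe_comp, Finset.sum_apply,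
    Function.comp_apply, LinearMap.flip_apply, mk_apply]
  rfl

variable {R M N d ℓ e} (he : ∀ y, ∑ j, ℓ j y • e j = y)
include he

theorem polyLawToTensor_comp_tensorToPolyLaw :
    polyLawToTensor R M N d ℓ e ∘ₗ tensorToPolyLaw R M N d = LinearMap.id := by
  refine TensorProduct.ext' fun f n => ?_
  have hcoeff : ∀ j, (⟨RawLaw.postcomp (ℓ j) (tensorToLaw R M N d (f ⊗ₜ n)),
      RawLaw.postcomp_mem (tensorToLaw_mem R M N d _) (ℓ j)⟩ : polyLawHomog R M R d) =
        ℓ j n • f := by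
    intro j
    have hℓ : ℓ j ∘ₗ LinearMap.toSpanSingleton R N n = ℓ j n • LinearMap.id := by
      ext; simp
    ext1
    change RawLaw.postcomp (ℓ j) (tensorToLaw R M N d (f ⊗ₜ n)) = _
    rw [tensorToLaw_tmul, RawLaw.postcomp_postcomp, hℓ, map_smul, LinearMap.smul_apply,
      RawLaw.postcomp_id, Submodule.coe_smul]
  calc polyLawToTensor R M N d ℓ e (tensorToPolyLaw R M N d (f ⊗ₜ n))
      = ∑ j, f ⊗ₜ (ℓ j n • e j) := by
        rw [polyLawToTensor_apply]
        simp only [tensorToPolyLaw, LinearMap.codRestrict_apply, hcoeff, TensorProduct.smul_tmul]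
    _ = f ⊗ₜ n := by rw [← TensorProduct.tmul_sum, he]

theorem tensorToPolyLaw_comp_polyLawToTensor :
    tensorToPolyLaw R M N d ∘ₗ polyLawToTensor R M N d ℓ e = LinearMap.id := by
  have hid : ∑ j, LinearMap.toSpanSingleton R N (e j) ∘ₗ ℓ j = LinearMap.id := by
    ext y; simpa using he y
  ext g : 2
  simp only [tensorToPolyLaw, LinearMap.comp_codRestrict, LinearMap.codRestrict_apply,
    LinearMap.coe_comp, Function.comp_apply, polyLawToTensor_apply, map_sum, tensorToLaw_tmul,
    RawLaw.postcomp_postcomp, LinearMap.id_coe, id_eq]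
  rw [← LinearMap.sum_apply, ← map_sum, hid, RawLaw.postcomp_id]

end TensorToLaw

theorem stmt_6 [Module.Finite R N] [Module.Projective R N] (d : ℕ) :
    ∃ Φ : (polyLawHomog R M R d) ⊗[R] N →ₗ[R] RawLaw R M N,
      (∀ (f : polyLawHomog R M R d) (nn : N)
        (S : Type u) [CommRing S] [Algebra R S] (x : S ⊗[R] M),
        Φ (f ⊗ₜ[R] nn) S x
          = (TensorProduct.rid R S (f.1 S x)) • ((1 : S) ⊗ₜ[R] nn)) ∧
      Function.Injective Φ ∧
      Set.range Φ = ↑(polyLawHomog R M N d) := by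
  obtain ⟨n, ℓ, e, he⟩ := Module.Finite.exists_dual_basis_of_projective R N
  have hΦ : ⇑(tensorToLaw R M N d) = Subtype.val ∘ tensorToPolyLaw R M N d := rfl
  refine ⟨tensorToLaw R M N d,
    fun f nn S _ _ x => (TensorProduct.rid_smul_one_tmul (f.1 S x) nn).symm, ?_, ?_⟩
  · rw [hΦ]
    exact Subtype.val_injective.comp
      (LinearMap.injective_of_comp_eq_id (tensorToPolyLaw R M N d) _
        (polyLawToTensor_comp_tensorToPolyLaw he))
  · rw [hΦ, Set.range_comp,
      (LinearMap.surjective_of_comp_eq_id _ (tensorToPolyLaw R M N d)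
        (tensorToPolyLaw_comp_polyLawToTensor he)).range_eq,
      Set.image_univ, Subtype.range_coe]
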